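/- Let μ ≥ 0 and s > 0 with μ·s < 1, and let (t_k)_{k≥0} be a strictly increasing sequence of positive reals. Define α_k = (2√s/t_{k+1})·cothc((√μ/2)·t_{k+1}) and γ_k = (4/t_k²)·cothc²((√μ/2)·t_k). Suppose the adaptive timestep rule holds with equality: (1 − α_k)·(t_{k+1}²/4)·sinhc²((√μ/2)·t_{k+1}) = (t_k²/4)·sinhc²((√μ/2)·t_k) for all k ≥ 0. Then: (i) γ₀ > μ; (ii) (1/s)·α_k² = (1 − α_k)·γ_k + μ·α_k for all k ≥ 0; (iii) γ_{k+1} = (1 − α_k)·γ_k + μ·α_k for all k ≥ 0; (iv) α_k·γ_k/(γ_k + μ·α_k) = (α_k − μ·s)/(1 − μ·s) for all k ≥ 0; and (v) α_k/γ_{k+1} = s/α_k = (√s·t_{k+1}/2)·tanhc((√μ/2)·t_{k+1}) for all k ≥ 0. (Consequently the original Nesterov accelerated gradient iteration with these α_k, γ_k coincides with the unified NAG family with parameters τ_k = (α_k − μ·s)/(1 − μ·s) and δ_k = (√s·t_{k+1}/2)·tanhc((√μ/2)·t_{k+1}).) -/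

import Mathlib

/-!
Put `S_k = (t_k² / 4) · sinhc²((√μ/2) t_k)`. The identity `cothc² x = x² + cschc² x` (a rescaled
`coth² = 1 + csch²`) turns the definitions into `γ_k = μ + 1 / S_k` and `α_k² = s · γ_{k+1}`, while
the adaptive rule reads `(1 - α_k) S_{k+1} = S_k`. Substituting the latter into `γ_{k+1} = μ + 1 / S_{k+1}`
gives the recursion of Nesterov's method; the remaining claims are algebraic consequences of it.
-/

noncomputable def sinhc (x : ℝ) : ℝ := if x = 0 then 1 else Real.sinh x / x
noncomputable def cschc (x : ℝ) : ℝ := 1 / sinhc x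
noncomputable def tanhc (x : ℝ) : ℝ := sinhc x / Real.cosh x
noncomputable def cothc (x : ℝ) : ℝ := 1 / tanhc x

lemma sinhc_pos (x : ℝ) : 0 < sinhc x := by
  unfold sinhc
  split_ifs with hx
  · exact one_pos
  · rcases lt_or_gt_of_ne hx with hneg | hpos
    · exact div_pos_of_neg_of_neg (Real.sinh_neg_iff.mpr hneg) hneg
    · exact div_pos (Real.sinh_pos_iff.mpr hpos) hpos

lemma sinh_eq_mul_sinhc (x : ℝ) : Real.sinh x = x * sinhc x := by
  unfold sinhc
  split_ifs with hx
  · simp [hx]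
  · field_simp

lemma tanhc_pos (x : ℝ) : 0 < tanhc x := div_pos (sinhc_pos x) (Real.cosh_pos x)

lemma cothc_eq_cosh_div_sinhc (x : ℝ) : cothc x = Real.cosh x / sinhc x := by
  rw [cothc, tanhc, one_div_div]

lemma cothc_pos (x : ℝ) : 0 < cothc x := one_div_pos.mpr (tanhc_pos x)

lemma cothc_sq (x : ℝ) : cothc x ^ 2 = x ^ 2 + cschc x ^ 2 := by
  have hsinhc := (sinhc_pos x).ne'
  rw [cothc_eq_cosh_div_sinhc, cschc, div_pow, Real.cosh_sq, sinh_eq_mul_sinhc]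
  field_simp

lemma four_div_sq_mul_cothc_sq {μ : ℝ} (hμ : 0 ≤ μ) {t : ℝ} (ht : t ≠ 0) :
    4 / t ^ 2 * cothc (√μ / 2 * t) ^ 2 = μ + 1 / (t ^ 2 / 4 * sinhc (√μ / 2 * t) ^ 2) := by
  have hsinhc := (sinhc_pos (√μ / 2 * t)).ne'
  rw [cothc_sq, cschc, mul_pow, div_pow, Real.sq_sqrt hμ]
  field_simp
  ring

lemma div_mul_cothc_sq {s : ℝ} (hs : 0 ≤ s) (t x : ℝ) :
    (2 * √s / t * cothc x) ^ 2 = s * (4 / t ^ 2 * cothc x ^ 2) := by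
  rw [mul_pow, div_pow, mul_pow, Real.sq_sqrt hs]
  ring

lemma div_div_mul_cothc {s : ℝ} (hs : 0 < s) {t : ℝ} (ht : t ≠ 0) (x : ℝ) :
    s / (2 * √s / t * cothc x) = √s * t / 2 * tanhc x := by
  have hsqrt := (Real.sqrt_pos.mpr hs).ne'
  have htanhc := (tanhc_pos x).ne'
  rw [cothc]
  field_simp
  rw [Real.sq_sqrt hs.le]

lemma add_inv_eq_of_sub_mul_eq {μ a S S' : ℝ} (hS : S ≠ 0) (h : (1 - a) * S' = S) :
    μ + 1 / S' = (1 - a) * (μ + 1 / S) + μ * a := by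
  have ha : 1 - a ≠ 0 := left_ne_zero_of_mul (h ▸ hS)
  have hS' : S' ≠ 0 := right_ne_zero_of_mul (h ▸ hS)
  subst h
  field_simp
  ring

lemma mul_div_add_eq_of_sq_eq {μ s a g : ℝ} (h : a ^ 2 = s * ((1 - a) * g + μ * a))
    (hga : g + μ * a ≠ 0) (hμs : 1 - μ * s ≠ 0) :
    a * g / (g + μ * a) = (a - μ * s) / (1 - μ * s) := by
  rw [div_eq_div_iff hga hμs]
  linear_combination (-μ) * h

theorem adaptive_timestep_recovers_original_nag_general
    (μ s : ℝ) (hμ : 0 ≤ μ) (hs : 0 < s) (hμs : μ * s < 1)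
    (t : ℕ → ℝ) (htpos : ∀ k, 0 < t k)
    (α γ : ℕ → ℝ)
    (hα : ∀ k, α k = 2 * Real.sqrt s / t (k + 1) * cothc (Real.sqrt μ / 2 * t (k + 1)))
    (hγ : ∀ k, γ k = 4 / t k ^ 2 * cothc (Real.sqrt μ / 2 * t k) ^ 2)
    (hadapt : ∀ k, (1 - α k) * (t (k + 1) ^ 2 / 4 * sinhc (Real.sqrt μ / 2 * t (k + 1)) ^ 2)
      = t k ^ 2 / 4 * sinhc (Real.sqrt μ / 2 * t k) ^ 2) :
    μ < γ 0 ∧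
    (∀ k, (1 / s) * α k ^ 2 = (1 - α k) * γ k + μ * α k) ∧
    (∀ k, γ (k + 1) = (1 - α k) * γ k + μ * α k) ∧
    (∀ k, α k * γ k / (γ k + μ * α k) = (α k - μ * s) / (1 - μ * s)) ∧
    (∀ k, α k / γ (k + 1) = s / α k ∧
      s / α k = Real.sqrt s * t (k + 1) / 2 * tanhc (Real.sqrt μ / 2 * t (k + 1))) := by
  set S : ℕ → ℝ := fun k => t k ^ 2 / 4 * sinhc (√μ / 2 * t k) ^ 2
  have hS : ∀ k, 0 < S k := fun k => by
    have := htpos k; have := sinhc_pos (√μ / 2 * t k); positivity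
  have hγS : ∀ k, γ k = μ + 1 / S k := fun k =>
    (hγ k).trans (four_div_sq_mul_cothc_sq hμ (htpos k).ne')
  have hγpos : ∀ k, 0 < γ k := fun k => by have := hS k; rw [hγS k]; positivity
  have hαpos : ∀ k, 0 < α k := fun k => by
    have := htpos (k + 1); have := cothc_pos (√μ / 2 * t (k + 1)); rw [hα k]; positivity
  have hα_sq : ∀ k, α k ^ 2 = s * γ (k + 1) := fun k => by
    rw [hα k, hγ (k + 1), div_mul_cothc_sq hs.le]
  have hrec : ∀ k, γ (k + 1) = (1 - α k) * γ k + μ * α k := fun k => by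
    rw [hγS, hγS]
    exact add_inv_eq_of_sub_mul_eq (hS k).ne' (hadapt k)
  refine ⟨?_, fun k => ?_, hrec, fun k => ?_, fun k => ⟨?_, ?_⟩⟩
  · exact (hγS 0).symm ▸ lt_add_of_pos_right μ (one_div_pos.mpr (hS 0))
  · rw [← hrec, hα_sq, ← mul_assoc, one_div_mul_cancel hs.ne', one_mul]
  · have := hαpos k; have := hγpos k
    exact mul_div_add_eq_of_sq_eq (hrec k ▸ hα_sq k) (by positivity) (by linarith)
  · rw [div_eq_div_iff (hγpos (k + 1)).ne' (hαpos k).ne']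
    linear_combination hα_sq k
  · rw [hα k, div_div_mul_cothc hs (htpos (k + 1)).ne']

/-- The adaptive timestep scheme recovers the original NAG: with
`α_k = (2√s/t_{k+1})·cothc((√μ/2)t_{k+1})` and `γ_k = (4/t_k²)·cothc²((√μ/2)t_k)`,
if the adaptive rule holds with equality, then `γ₀ > μ`, the sequences satisfy the
original NAG recursions, and the original NAG parameters coincide with those of the
unified NAG family. -/
theorem adaptive_timestep_recovers_original_nag
    (μ s : ℝ) (hμ : 0 ≤ μ) (hs : 0 < s) (hμs : μ * s < 1)
    (t : ℕ → ℝ) (ht : StrictMono t) (htpos : ∀ k, 0 < t k)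
    (α γ : ℕ → ℝ)
    (hα : ∀ k, α k = 2 * Real.sqrt s / t (k + 1) * cothc (Real.sqrt μ / 2 * t (k + 1)))
    (hγ : ∀ k, γ k = 4 / t k ^ 2 * cothc (Real.sqrt μ / 2 * t k) ^ 2)
    (hadapt : ∀ k, (1 - α k) * (t (k + 1) ^ 2 / 4 * sinhc (Real.sqrt μ / 2 * t (k + 1)) ^ 2)
      = t k ^ 2 / 4 * sinhc (Real.sqrt μ / 2 * t k) ^ 2) :
    μ < γ 0 ∧
    (∀ k, (1 / s) * α k ^ 2 = (1 - α k) * γ k + μ * α k) ∧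
    (∀ k, γ (k + 1) = (1 - α k) * γ k + μ * α k) ∧
    (∀ k, α k * γ k / (γ k + μ * α k) = (α k - μ * s) / (1 - μ * s)) ∧
    (∀ k, α k / γ (k + 1) = s / α k ∧
      s / α k = Real.sqrt s * t (k + 1) / 2 * tanhc (Real.sqrt μ / 2 * t (k + 1))) :=
  adaptive_timestep_recovers_original_nag_general μ s hμ hs hμs t htpos α γ hα hγ hadapt
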